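/- arXiv:0905.3159 — 6 statements merged into one kernel-verified Lean document; each statement's English description precedes it below -/
import Mathlib

section
/- Let ρ₀, c₀, S₀ be positive real numbers, α₀ = c₀/(2S₀), β₀ = 4S₀/(ρ₀c₀²). Let w, p : ℝ × ℝ → ℝ be differentiable functions of (t, z) with 1 + β₀p(t,z) > 0 everywhere, satisfying the Hooke law ∂_t p + w ∂_z p + ρ₀c₀²(1 + β₀p) ∂_z w = 0. Then the strain density Q(t,z) = (1 + β₀p(t,z))^{α₀/(2c₀)} satisfies the conservation law ∂_t Q + ∂_z(Q w) = 0. -/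
/-!
Write `g = 1 + β₀ p`. Multiplying the Hooke law by `β₀` turns it into the transport law
`g_t + w g_z + κ g w_z = 0` with `κ = β₀ ρ₀ c₀² = 4 S₀`, and the strain exponent is
`r = α₀ / (2 c₀) = 1 / κ`. By the chain and product rules,
`(g^r)_t + (g^r w)_z = r g^(r-1) (g_t + w g_z) + g^r w_z = (1 - r κ) g^r w_z = 0`.
-/

section Transport

variable {E : Type*} [NormedAddCommGroup E] [NormedSpace ℝ E] {g p w : E → ℝ} {x : E}

theorem fderiv_rpow_add_fderiv_rpow_mul (hg : DifferentiableAt ℝ g x)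
    (hw : DifferentiableAt ℝ w x) (hgx : g x ≠ 0) (r : ℝ) (u v : E) :
    fderiv ℝ (fun y => g y ^ r) x u + fderiv ℝ (fun y => g y ^ r * w y) x v
      = r * g x ^ (r - 1) * (fderiv ℝ g x u + w x * fderiv ℝ g x v)
        + g x ^ r * fderiv ℝ w x v := by
  have hQ : HasFDerivAt (fun y => g y ^ r) ((r * g x ^ (r - 1)) • fderiv ℝ g x) x :=
    hg.hasFDerivAt.rpow_const (Or.inl hgx)
  have hQw : HasFDerivAt (fun y => g y ^ r * w y)
      (g x ^ r • fderiv ℝ w x + w x • (r * g x ^ (r - 1)) • fderiv ℝ g x) x :=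
    hQ.mul hw.hasFDerivAt
  rw [hQ.fderiv, hQw.fderiv]
  simp only [add_apply, smul_apply, smul_eq_mul]
  ring

theorem fderiv_rpow_add_fderiv_rpow_mul_eq_zero_of_transport (hg : DifferentiableAt ℝ g x)
    (hw : DifferentiableAt ℝ w x) (hgx : g x ≠ 0) {r κ : ℝ} (hrκ : r * κ = 1) (u v : E)
    (htransport : fderiv ℝ g x u + w x * fderiv ℝ g x v + κ * g x * fderiv ℝ w x v = 0) :
    fderiv ℝ (fun y => g y ^ r) x u + fderiv ℝ (fun y => g y ^ r * w y) x v = 0 := by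
  rw [fderiv_rpow_add_fderiv_rpow_mul hg hw hgx, Real.rpow_sub_one hgx]
  field_simp
  linear_combination r * g x ^ r * htransport - g x ^ r * g x * fderiv ℝ w x v * hrκ

theorem transport_one_add_mul (hp : DifferentiableAt ℝ p x) (β K : ℝ) (u v : E)
    (h : fderiv ℝ p x u + w x * fderiv ℝ p x v + K * (1 + β * p x) * fderiv ℝ w x v = 0) :
    fderiv ℝ (fun y => 1 + β * p y) x u + w x * fderiv ℝ (fun y => 1 + β * p y) x v
      + β * K * (1 + β * p x) * fderiv ℝ w x v = 0 := by
  simp only [fderiv_const_add, fderiv_const_mul hp, smul_apply, smul_eq_mul]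
  linear_combination β * h

end Transport

/-- If `(w, p)` satisfies the Hooke law
`∂ₜ p + w ∂_z p + ρ₀ c₀² (1 + β₀ p) ∂_z w = 0`, then the strain density
`Q = (1 + β₀ p)^(α₀/(2c₀))` satisfies the conservation law
`∂ₜ Q + ∂_z (Q w) = 0`.  The variables are ordered as `(t, z)`. -/
theorem strain_density_conservation (ρ₀ c₀ S₀ : ℝ)
    (hρ₀ : 0 < ρ₀) (hc₀ : 0 < c₀) (hS₀ : 0 < S₀)
    (α₀ β₀ : ℝ) (hα₀ : α₀ = c₀ / (2 * S₀)) (hβ₀ : β₀ = 4 * S₀ / (ρ₀ * c₀ ^ 2))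
    (w p : ℝ × ℝ → ℝ) (hw : Differentiable ℝ w) (hp : Differentiable ℝ p)
    (hpos : ∀ x : ℝ × ℝ, 0 < 1 + β₀ * p x)
    (hhooke : ∀ x : ℝ × ℝ,
      fderiv ℝ p x (1, 0) + w x * fderiv ℝ p x (0, 1)
        + ρ₀ * c₀ ^ 2 * (1 + β₀ * p x) * fderiv ℝ w x (0, 1) = 0)
    (Q : ℝ × ℝ → ℝ) (hQ : Q = fun x => (1 + β₀ * p x) ^ (α₀ / (2 * c₀))) :
    ∀ x : ℝ × ℝ,
      fderiv ℝ Q x (1, 0) + fderiv ℝ (fun y => Q y * w y) x (0, 1) = 0 := by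
  have hexponent : α₀ / (2 * c₀) * (β₀ * (ρ₀ * c₀ ^ 2)) = 1 := by
    rw [hα₀, hβ₀]
    field_simp
    ring
  intro x
  subst hQ
  exact fderiv_rpow_add_fderiv_rpow_mul_eq_zero_of_transport
    (((differentiableAt_const _).add ((hp x).const_mul β₀))) (hw x) (hpos x).ne' hexponent _ _
    (transport_one_add_mul (hp x) β₀ _ _ _ (hhooke x))
end

section
/- Let ρ₀, c₀, S₀, g, k be real numbers with ρ₀, c₀, S₀ > 0, α₀ = c₀/(2S₀), β₀ = 4S₀/(ρ₀c₀²), γ₀ = 2c₀/α₀ + 1, and P(q) = (c₀²/γ₀) q^{γ₀}. Let w, p : ℝ × ℝ → ℝ be differentiable functions of (t,z) with 1 + β₀p(t,z) > 0 everywhere, satisfying the dynamics equation ρ₀(∂_t w + w ∂_z w) + ∂_z p + ρ₀g + k|w|w = 0 and the Hooke law ∂_t p + w ∂_z p + ρ₀c₀²(1 + β₀p) ∂_z w = 0. Then the strain density Q(t,z) = (1 + β₀p(t,z))^{α₀/(2c₀)} and the momentum m = Q w satisfy the conservative momentum equation ∂_t m + ∂_z(m w + P(Q)) + g Q + (k/ρ₀)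 Q |w| w = 0. -/
/-!
Along the flow, Hooke's law turns into conservation of mass for the strain density
`q(p) = (1 + β₀ p)^s`, `s = α₀/(2c₀)`, because the exponent is chosen so that
`q'(p) · ρ₀c₀²(1 + β₀p) = q(p)`. The same choice, together with `s γ₀ = s + 1`, makes
`d/dp P(q(p)) = q(p)/ρ₀`, so `∂_z P(Q) = Q ∂_z p / ρ₀`. By the product rule
`∂ₜ(Qw) + ∂_z(Qw²) = w (∂ₜQ + ∂_z(Qw)) + Q (∂ₜw + w ∂_z w)`, and the momentum
equation is `Q/ρ₀` times the dynamics equation.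
-/

open Real

theorem div_two_mul_mul_adiabatic_eq_add_one {α c γ : ℝ} (hα : α ≠ 0) (hc : c ≠ 0)
    (hγ : γ = 2 * c / α + 1) : α / (2 * c) * γ = α / (2 * c) + 1 := by
  subst hγ
  field_simp
  ring

theorem div_two_mul_mul_compressibility_mul_eq_one {ρ c S α β : ℝ} (hρ : ρ ≠ 0) (hc : c ≠ 0)
    (hS : S ≠ 0) (hα : α = c / (2 * S)) (hβ : β = 4 * S / (ρ * c ^ 2)) :
    α / (2 * c) * β * (ρ * c ^ 2) = 1 := by
  subst hα hβ
  field_simp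
  ring

section StrainDensity

variable {β s r : ℝ}

theorem hasDerivAt_one_add_mul_rpow (hr : 0 < 1 + β * r) :
    HasDerivAt (fun r => (1 + β * r) ^ s) (s * β * (1 + β * r) ^ (s - 1)) r :=
  ((((hasDerivAt_id' r).const_mul β).const_add 1).rpow_const (Or.inl hr.ne')).congr_deriv
    (by ring)

theorem rpow_sub_one_mul_bulk_modulus {κ : ℝ} (hr : 0 < 1 + β * r) (hsβκ : s * β * κ = 1) :
    s * β * (1 + β * r) ^ (s - 1) * (κ * (1 + β * r)) = (1 + β * r) ^ s := by
  rw [rpow_sub_one hr.ne', mul_div_assoc', div_mul_eq_mul_div, mul_div_assoc,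
    mul_div_cancel_right₀ _ hr.ne']
  linear_combination (1 + β * r) ^ s * hsβκ

theorem hasDerivAt_strain_pressure {ρ c γ : ℝ} (hr : 0 < 1 + β * r) (hγ : γ ≠ 0)
    (hsγ : s * γ = s + 1) (hsβ : s * β * (ρ * c ^ 2) = 1) :
    HasDerivAt (fun r => c ^ 2 / γ * ((1 + β * r) ^ s) ^ γ) ((1 + β * r) ^ s / ρ) r := by
  have hρ : ρ ≠ 0 := by rintro rfl; simp at hsβ
  refine (((hasDerivAt_one_add_mul_rpow hr).rpow_const
    (Or.inl (rpow_pos_of_pos hr s).ne')).const_mul (c ^ 2 / γ)).congr_deriv ?_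
  rw [← rpow_mul hr.le, mul_sub, hsγ, mul_one, add_sub_cancel_left, rpow_one,
    rpow_sub_one hr.ne']
  field_simp
  linear_combination hsβ

end StrainDensity

section Flow

variable {E : Type*} [NormedAddCommGroup E] [NormedSpace ℝ E] {w p : E → ℝ} {x : E}

theorem fderiv_comp_apply_of_hasDerivAt {q : ℝ → ℝ} {q' : ℝ} (hq : HasDerivAt q q' (p x))
    (hp : DifferentiableAt ℝ p x) (v : E) :
    fderiv ℝ (fun y => q (p y)) x v = q' * fderiv ℝ p x v :=
  congrArg (· v) (hq.comp_hasFDerivAt x hp.hasFDerivAt).fderiv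

theorem mass_conservation_of_hooke {q : ℝ → ℝ} {q' K : ℝ} (et ez : E)
    (hq : HasDerivAt q q' (p x)) (hp : DifferentiableAt ℝ p x) (hqK : q' * K = q (p x))
    (hhooke : fderiv ℝ p x et + w x * fderiv ℝ p x ez + K * fderiv ℝ w x ez = 0) :
    fderiv ℝ (fun y => q (p y)) x et + w x * fderiv ℝ (fun y => q (p y)) x ez
      + q (p x) * fderiv ℝ w x ez = 0 := by
  rw [fderiv_comp_apply_of_hasDerivAt hq hp, fderiv_comp_apply_of_hasDerivAt hq hp, ← hqK]
  linear_combination q' * hhooke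

theorem fderiv_momentum_add_fderiv_flux {Q : E → ℝ} (et ez : E) (hQ : DifferentiableAt ℝ Q x)
    (hw : DifferentiableAt ℝ w x) :
    fderiv ℝ (fun y => Q y * w y) x et + fderiv ℝ (fun y => Q y * w y * w y) x ez
      = w x * (fderiv ℝ Q x et + w x * fderiv ℝ Q x ez + Q x * fderiv ℝ w x ez)
        + Q x * (fderiv ℝ w x et + w x * fderiv ℝ w x ez) := by
  have hm := hQ.hasFDerivAt.fun_mul hw.hasFDerivAt
  rw [hm.fderiv, (hm.fun_mul hw.hasFDerivAt).fderiv]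
  simp only [add_apply, smul_apply, smul_eq_mul]
  ring

end Flow

/-- If `(w, p)` satisfies the dynamics equation with gravity and friction and
the Hooke law, then the strain density `Q = (1 + β₀ p)^(α₀/(2c₀))` and momentum
`m = Q w` satisfy the conservative momentum equation
`∂ₜ m + ∂_z (m w + P(Q)) + g Q + (k/ρ₀) Q |w| w = 0`, where
`P(q) = (c₀²/γ₀) q^γ₀` and `γ₀ = 2c₀/α₀ + 1`.  Variables are ordered `(t, z)`. -/
theorem momentum_conservation (ρ₀ c₀ S₀ g k : ℝ)
    (hρ₀ : 0 < ρ₀) (hc₀ : 0 < c₀) (hS₀ : 0 < S₀)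
    (α₀ β₀ γ₀ : ℝ) (hα₀ : α₀ = c₀ / (2 * S₀)) (hβ₀ : β₀ = 4 * S₀ / (ρ₀ * c₀ ^ 2))
    (hγ₀ : γ₀ = 2 * c₀ / α₀ + 1)
    (w p : ℝ × ℝ → ℝ) (hw : Differentiable ℝ w) (hp : Differentiable ℝ p)
    (hpos : ∀ x : ℝ × ℝ, 0 < 1 + β₀ * p x)
    (hdyn : ∀ x : ℝ × ℝ,
      ρ₀ * (fderiv ℝ w x (1, 0) + w x * fderiv ℝ w x (0, 1))
        + fderiv ℝ p x (0, 1) + ρ₀ * g + k * |w x| * w x = 0)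
    (hhooke : ∀ x : ℝ × ℝ,
      fderiv ℝ p x (1, 0) + w x * fderiv ℝ p x (0, 1)
        + ρ₀ * c₀ ^ 2 * (1 + β₀ * p x) * fderiv ℝ w x (0, 1) = 0)
    (Q : ℝ × ℝ → ℝ) (hQ : Q = fun x => (1 + β₀ * p x) ^ (α₀ / (2 * c₀)))
    (m : ℝ × ℝ → ℝ) (hm : m = fun x => Q x * w x) :
    ∀ x : ℝ × ℝ,
      fderiv ℝ m x (1, 0)
        + fderiv ℝ (fun y => m y * w y + c₀ ^ 2 / γ₀ * Q y ^ γ₀) x (0, 1)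
        + g * Q x + k / ρ₀ * Q x * |w x| * w x = 0 := by
  intro x
  have hα₀' : α₀ ≠ 0 := by rw [hα₀]; positivity
  have hγ₀' : γ₀ ≠ 0 := by rw [hγ₀, hα₀]; positivity
  have hsγ := div_two_mul_mul_adiabatic_eq_add_one hα₀' hc₀.ne' hγ₀
  have hsβ :=
    div_two_mul_mul_compressibility_mul_eq_one hρ₀.ne' hc₀.ne' hS₀.ne' hα₀ hβ₀
  have hq := hasDerivAt_one_add_mul_rpow (s := α₀ / (2 * c₀)) (hpos x)
  have hP := (hasDerivAt_strain_pressure (hpos x) hγ₀' hsγ hsβ).comp_hasFDerivAt x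
    (hp x).hasFDerivAt
  have hmass := mass_conservation_of_hooke (1, 0) (0, 1) hq (hp x)
    (rpow_sub_one_mul_bulk_modulus (hpos x) hsβ) (hhooke x)
  have hQd := (hq.comp_hasFDerivAt x (hp x).hasFDerivAt).differentiableAt
  simp only [Function.comp_def] at hP hQd
  subst hQ hm
  beta_reduce
  rw [fderiv_fun_add ((hQd.fun_mul (hw x)).fun_mul (hw x)) hP.differentiableAt, add_apply,
    ← add_assoc, fderiv_momentum_add_fderiv_flux _ _ hQd (hw x), hP.fderiv]
  simp only [smul_apply, smul_eq_mul]
  field_simp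
  linear_combination ρ₀ * w x * hmass + (1 + β₀ * p x) ^ (α₀ / (2 * c₀)) * hdyn x
end

section
/- Let c₀, α₀ be positive real numbers, γ₀ = 2c₀/α₀ + 1, and P(q) = (c₀²/γ₀) q^{γ₀}. Let q₀, q₀f, q_s, q_ref be real numbers with 1 ≤ q₀ ≤ q₀f, q₀f² ≤ q_ref, and q₀ < q_s < q_ref, and set A = c₀ q_ref^{c₀/α₀} · (q_ref/q₀f). Then the Rankine–Hugoniot shock speed satisfies (A/2)·(q_s − q₀)/q_s + ((q_s + q₀)/2)·√((P(q_s) − P(q₀))/(q_s q₀ (q_s − q₀))) < A; that is, the front shock wave propagates slower than the strain wave of reference velocity A. -/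
/-!
The pressure `P` is convex with `P' = c²`, where `c(q) = c₀ q^(c₀/α₀)` is the strain wave speed,
so the chord slope in the Rankine–Hugoniot speed is at most `c(q_s)²`. Since `q ↦ c(q)² q` is
increasing and `q₀f² ≤ q_ref`, this makes the square-root term smaller than `A / q_s`, and
replacing it by `A / q_s` turns the shock speed into exactly `A`.
-/

open Real

lemma slope_pressure_le {c γ : ℝ} (hγ : 1 ≤ γ) {a b : ℝ} (ha : 0 ≤ a) (hab : a < b) :
    slope (fun q : ℝ => c ^ 2 / γ * q ^ γ) a b ≤ c ^ 2 * b ^ (γ - 1) := by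
  have hconvex : ConvexOn ℝ (Set.Ici 0) fun q : ℝ => c ^ 2 / γ * q ^ γ :=
    (convexOn_rpow hγ).smul (by positivity)
  have hderiv : HasDerivAt (fun q : ℝ => c ^ 2 / γ * q ^ γ) (c ^ 2 / γ * (γ * b ^ (γ - 1))) b :=
    (hasDerivAt_rpow_const (Or.inr hγ)).const_mul _
  calc slope (fun q : ℝ => c ^ 2 / γ * q ^ γ) a b ≤ c ^ 2 / γ * (γ * b ^ (γ - 1)) :=
        hconvex.slope_le_of_hasDerivAt ha (ha.trans hab.le) hab hderiv
    _ = c ^ 2 * b ^ (γ - 1) := by field_simp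

lemma sq_mul_rpow_mul_lt_sq {c β q q₀f qref : ℝ} (hc : 0 < c) (hβ : 0 ≤ β) (hq : 0 < q)
    (hqref : q < qref) (hq₀f : 0 < q₀f) (hq₀f_sq : q₀f ^ 2 ≤ qref) :
    c ^ 2 * q ^ (2 * β) * q < (c * qref ^ β * (qref / q₀f)) ^ 2 := by
  have hqref_pos : 0 < qref := hq.trans hqref
  have hmono : q ^ (2 * β) * q < qref ^ (2 * β) * qref :=
    mul_lt_mul' (rpow_le_rpow hq.le hqref.le (by positivity)) hqref hq.le (by positivity)
  have hqref_le : qref ≤ (qref / q₀f) ^ 2 := by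
    rw [div_pow, le_div_iff₀ (by positivity)]
    nlinarith
  calc c ^ 2 * q ^ (2 * β) * q < c ^ 2 * (qref ^ (2 * β) * qref) := by
        rw [mul_assoc]; gcongr
    _ ≤ c ^ 2 * (qref ^ (2 * β) * (qref / q₀f) ^ 2) := by gcongr
    _ = (c * qref ^ β * (qref / q₀f)) ^ 2 := by
        rw [mul_comm 2 β, rpow_mul hqref_pos.le, rpow_two]; ring

lemma shock_speed_lt_of_lt {A s q₀ qs : ℝ} (hqs : 0 < qs) (hsum : 0 < qs + q₀) (hs : s < A / qs) :
    A / 2 * ((qs - q₀) / qs) + (qs + q₀) / 2 * s < A := by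
  have hspeed : A / 2 * ((qs - q₀) / qs) + (qs + q₀) / 2 * (A / qs) = A := by
    field_simp; ring
  nlinarith

/-- The front shock wave propagates slower than the strain wave: the
Rankine–Hugoniot shock speed is smaller than the reference velocity
`A = c₀ q_ref^(c₀/α₀) · (q_ref / q₀f)`, where `P(q) = (c₀²/γ₀) q^γ₀` and
`γ₀ = 2c₀/α₀ + 1`. -/
theorem shock_slower_than_strain_wave (c₀ α₀ : ℝ) (hc₀ : 0 < c₀) (hα₀ : 0 < α₀)
    (γ₀ : ℝ) (hγ₀ : γ₀ = 2 * c₀ / α₀ + 1)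
    (P : ℝ → ℝ) (hP : P = fun q : ℝ => c₀ ^ 2 / γ₀ * q ^ γ₀)
    (q₀ q₀f qs qref : ℝ)
    (h1 : 1 ≤ q₀) (h2 : q₀ ≤ q₀f) (h3 : q₀f ^ 2 ≤ qref)
    (h4 : q₀ < qs) (h5 : qs < qref)
    (A : ℝ) (hA : A = c₀ * qref ^ (c₀ / α₀) * (qref / q₀f)) :
    A / 2 * ((qs - q₀) / qs)
      + (qs + q₀) / 2 * Real.sqrt ((P qs - P q₀) / (qs * q₀ * (qs - q₀))) < A := by
  have hβ : 0 ≤ c₀ / α₀ := by positivity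
  have hγ : γ₀ - 1 = 2 * (c₀ / α₀) := by rw [hγ₀]; ring
  have hq₀ : 0 < q₀ := by linarith
  have hqs : 0 < qs := by linarith
  have hqref : 0 < qref := by linarith
  have hq₀f : 0 < q₀f := by linarith
  have hA_pos : 0 < A := by rw [hA]; positivity
  have hchord : (P qs - P q₀) / (qs * q₀ * (qs - q₀)) < (A / qs) ^ 2 := calc
    _ = slope P q₀ qs / (qs * q₀) := by rw [slope_def_field, div_div, mul_comm (qs - q₀)]
    _ ≤ c₀ ^ 2 * qs ^ (γ₀ - 1) / (qs * q₀) := by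
        gcongr
        exact hP ▸ slope_pressure_le (by linarith) hq₀.le h4
    _ ≤ c₀ ^ 2 * qs ^ (γ₀ - 1) / qs := by gcongr; exact le_mul_of_one_le_right hqs.le h1
    _ < (A / qs) ^ 2 := by
        rw [div_pow, div_lt_div_iff₀ hqs (by positivity), hγ, hA]
        nlinarith [sq_mul_rpow_mul_lt_sq hc₀ hβ hqs h5 hq₀f h3]
  exact shock_speed_lt_of_lt hqs (by positivity) ((sqrt_lt' (by positivity)).mpr hchord)
end

section
/- Let c₀, α₀ be positive real numbers, γ₀ = 2c₀/α₀ + 1, P(q) = (c₀²/γ₀) q^{γ₀}, and let A > 0 and 0 < q₀ < q_s. Then (A/2)·(q_s − q₀)/q_s + ((q_s + q₀)/2)·√((P(q_s) − P(q₀))/(q_s q₀ (q_s − q₀))) > c₀ q₀^{c₀/α₀}; that is, the Rankine–Hugoniot shock speed exceeds the local wave speed c(q₀) of the state ahead of the shock. -/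
/-!
Since `P' = c²` is increasing, `P` is strictly convex, so the secant slope
`(P q_s - P q₀) / (q_s - q₀)` exceeds the tangent slope `P' q₀ = c(q₀)²`. The square-root term of
the shock speed is `(q_s + q₀)/2 · √(slope / (q_s q₀))`, and by AM–GM `(q_s + q₀)/2 ≥ √(q_s q₀)`,
so it is at least `√slope > c(q₀)`; the remaining term `(A/2)(1 - q₀/q_s)` is nonnegative.
-/

open Real Set

noncomputable def shockSpeed (P : ℝ → ℝ) (A q₀ qs : ℝ) : ℝ :=
  A / 2 * ((qs - q₀) / qs) + (qs + q₀) / 2 * √((P qs - P q₀) / (qs * q₀ * (qs - q₀)))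

theorem Real.sqrt_mul_le_add_div_two {a b : ℝ} (ha : 0 ≤ a) (hb : 0 ≤ b) :
    √(a * b) ≤ (a + b) / 2 :=
  sqrt_le_iff.2 ⟨by positivity, by nlinarith [sq_nonneg (a - b)]⟩

theorem lt_add_div_two_mul_sqrt_div_mul {x s a b : ℝ} (hx : 0 ≤ x) (ha : 0 < a) (hb : 0 < b)
    (hxs : x ^ 2 < s) : x < (a + b) / 2 * √(s / (a * b)) :=
  calc x < √s := (lt_sqrt hx).2 hxs
    _ = √(a * b) * √(s / (a * b)) := by
      rw [← sqrt_mul (by positivity), mul_div_cancel₀ _ (by positivity)]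
    _ ≤ (a + b) / 2 * √(s / (a * b)) := by
      gcongr
      exact sqrt_mul_le_add_div_two ha.le hb.le

theorem StrictConvexOn.const_mul {s : Set ℝ} {f : ℝ → ℝ} (hf : StrictConvexOn ℝ s f) {k : ℝ}
    (hk : 0 < k) : StrictConvexOn ℝ s fun x => k * f x := by
  refine ⟨hf.1, fun x hx y hy hxy a b ha hb hab => ?_⟩
  have h := hf.2 hx hy hxy ha hb hab
  simp only [smul_eq_mul] at h ⊢
  nlinarith

theorem StrictConvexOn.lt_shockSpeed {P : ℝ → ℝ} {S : Set ℝ} (hP : StrictConvexOn ℝ S P)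
    {c A q₀ qs : ℝ} (hc : 0 ≤ c) (hA : 0 ≤ A) (hq₀ : 0 < q₀) (hqs : q₀ < qs)
    (hq₀S : q₀ ∈ S) (hqsS : qs ∈ S) (hP' : HasDerivAt P (c ^ 2) q₀) :
    c < shockSpeed P A q₀ qs := by
  have hqs₀ : 0 < qs := hq₀.trans hqs
  have hslope : c ^ 2 < slope P q₀ qs := hP.lt_slope_of_hasDerivAt hq₀S hqsS hqs hP'
  have hsqrt : c < (qs + q₀) / 2 * √(slope P q₀ qs / (qs * q₀)) :=
    lt_add_div_two_mul_sqrt_div_mul hc hqs₀ hq₀ hslope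
  have hfront : 0 ≤ A / 2 * ((qs - q₀) / qs) := by
    have : 0 ≤ qs - q₀ := by linarith
    positivity
  rw [slope_def_field, div_div, mul_comm (qs - q₀)] at hsqrt
  unfold shockSpeed
  linarith

theorem hasDerivAt_mul_rpow_two_mul_add_one {c β q : ℝ} (hβ : 0 ≤ β) (hq : 0 < q) :
    HasDerivAt (fun q : ℝ => c ^ 2 / (2 * β + 1) * q ^ (2 * β + 1)) ((c * q ^ β) ^ 2) q := by
  refine ((hasDerivAt_rpow_const (Or.inr (by linarith))).const_mul _).congr_deriv ?_
  rw [add_sub_cancel_right, mul_comm 2 β, rpow_mul hq.le, rpow_two]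
  field_simp

/-- The Rankine–Hugoniot shock speed exceeds the local wave speed
`c(q₀) = c₀ q₀^(c₀/α₀)` of the state ahead of the shock, where
`P(q) = (c₀²/γ₀) q^γ₀` and `γ₀ = 2c₀/α₀ + 1`. -/
theorem shock_faster_than_local_speed (c₀ α₀ : ℝ) (hc₀ : 0 < c₀) (hα₀ : 0 < α₀)
    (γ₀ : ℝ) (hγ₀ : γ₀ = 2 * c₀ / α₀ + 1)
    (P : ℝ → ℝ) (hP : P = fun q : ℝ => c₀ ^ 2 / γ₀ * q ^ γ₀)
    (A q₀ qs : ℝ) (hA : 0 < A) (hq₀ : 0 < q₀) (hqs : q₀ < qs) :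
    c₀ * q₀ ^ (c₀ / α₀)
      < A / 2 * ((qs - q₀) / qs)
        + (qs + q₀) / 2 * Real.sqrt ((P qs - P q₀) / (qs * q₀ * (qs - q₀))) := by
  have hβ : 0 < c₀ / α₀ := div_pos hc₀ hα₀
  rw [mul_div_assoc] at hγ₀
  subst hγ₀ hP
  have hconvex : StrictConvexOn ℝ (Ici 0) fun q : ℝ => c₀ ^ 2 / (2 * (c₀ / α₀) + 1) *
      q ^ (2 * (c₀ / α₀) + 1) :=
    (strictConvexOn_rpow (by linarith)).const_mul (by positivity)
  exact hconvex.lt_shockSpeed (by positivity) hA.le hq₀ hqs hq₀.le (hq₀.trans hqs).le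
    (hasDerivAt_mul_rpow_two_mul_add_one hβ.le hq₀)
end

section
/- Let D ⊆ ℝ × ℝ be an open set, u, c, S : ℝ × ℝ → ℝ arbitrary functions, f : ℝ → ℝ differentiable, and q : ℝ × ℝ → ℝ a function of (x, t) admitting partial derivatives on D; set m(x,t) = f(q(x,t)). Assume that for all (x,t) ∈ D: ∂_t q + ∂_x m = 0 and ∂_t m + 2u(q,m)·∂_x m + (c(q,m)² − u(q,m)²)·∂_x q = S(q,m). Then for all (x,t) ∈ D: (c(q,m)² − (u(q,m) − f′(q))²)·∂_x q = S(q,m), where all functions are evaluated at (q(x,t), m(x,t)) and f′ at q(x,t). -/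
theorem HasDerivAt.eq_deriv_mul_of_comp {𝕜 : Type*} [NontriviallyNormedField 𝕜] {f g : 𝕜 → 𝕜}
    {a g' h' : 𝕜} (hf : DifferentiableAt 𝕜 f (g a)) (hg : HasDerivAt g g' a)
    (hfg : HasDerivAt (fun x => f (g x)) h' a) : h' = _root_.deriv f (g a) * g' :=
  hfg.unique (hf.hasDerivAt.comp a hg)

/-- `a` stands for `f′(q)`: the chain rule gives `m_x = a q_x` and `m_t = a q_t`. -/
theorem linkage_second_equation {R : Type*} [CommRing R] {a u c s qx qt mx mt : R}
    (hmx : mx = a * qx) (hmt : mt = a * qt) (h1 : qt + mx = 0)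
    (h2 : mt + 2 * u * mx + (c ^ 2 - u ^ 2) * qx = s) :
    (c ^ 2 - (u - a) ^ 2) * qx = s := by
  subst hmx hmt
  linear_combination h2 - a * h1

theorem linkage_reduction_general (D : Set (ℝ × ℝ))
    (u c S : ℝ × ℝ → ℝ)
    (f : ℝ → ℝ) (hf : Differentiable ℝ f)
    (q : ℝ × ℝ → ℝ) (qx qt : ℝ × ℝ → ℝ)
    (hqx : ∀ p ∈ D, HasDerivAt (fun x => q (x, p.2)) (qx p) p.1)
    (hqt : ∀ p ∈ D, HasDerivAt (fun t => q (p.1, t)) (qt p) p.2)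
    (m : ℝ × ℝ → ℝ) (hm : m = fun p => f (q p))
    (mx mt : ℝ × ℝ → ℝ)
    (hmx : ∀ p ∈ D, HasDerivAt (fun x => m (x, p.2)) (mx p) p.1)
    (hmt : ∀ p ∈ D, HasDerivAt (fun t => m (p.1, t)) (mt p) p.2)
    (h1 : ∀ p ∈ D, qt p + mx p = 0)
    (h2 : ∀ p ∈ D,
      mt p + 2 * u (q p, m p) * mx p
        + (c (q p, m p) ^ 2 - u (q p, m p) ^ 2) * qx p = S (q p, m p)) :
    ∀ p ∈ D,
      (c (q p, m p) ^ 2 - (u (q p, m p) - deriv f (q p)) ^ 2) * qx p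
        = S (q p, m p) := by
  intro p hp
  subst hm
  exact linkage_second_equation
    ((hqx p hp).eq_deriv_mul_of_comp (hf _) (hmx p hp))
    ((hqt p hp).eq_deriv_mul_of_comp (hf _) (hmt p hp)) (h1 p hp) (h2 p hp)

/-- For a 2×2 hyperbolic system `q_t + m_x = 0`,
`m_t + 2u m_x + (c² − u²) q_x = S(q, m)` with a linkage `m = f(q)`, the second
equation reduces to `(c² − (u − f′(q))²) q_x = S(q, m)`.
Variables are ordered `(x, t)`. -/
theorem linkage_reduction (D : Set (ℝ × ℝ)) (hD : IsOpen D)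
    (u c S : ℝ × ℝ → ℝ)
    (f : ℝ → ℝ) (hf : Differentiable ℝ f)
    (q : ℝ × ℝ → ℝ) (qx qt : ℝ × ℝ → ℝ)
    (hqx : ∀ p ∈ D, HasDerivAt (fun x => q (x, p.2)) (qx p) p.1)
    (hqt : ∀ p ∈ D, HasDerivAt (fun t => q (p.1, t)) (qt p) p.2)
    (m : ℝ × ℝ → ℝ) (hm : m = fun p => f (q p))
    (mx mt : ℝ × ℝ → ℝ)
    (hmx : ∀ p ∈ D, HasDerivAt (fun x => m (x, p.2)) (mx p) p.1)
    (hmt : ∀ p ∈ D, HasDerivAt (fun t => m (p.1, t)) (mt p) p.2)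
    (h1 : ∀ p ∈ D, qt p + mx p = 0)
    (h2 : ∀ p ∈ D,
      mt p + 2 * u (q p, m p) * mx p
        + (c (q p, m p) ^ 2 - u (q p, m p) ^ 2) * qx p = S (q p, m p)) :
    ∀ p ∈ D,
      (c (q p, m p) ^ 2 - (u (q p, m p) - deriv f (q p)) ^ 2) * qx p
        = S (q p, m p) :=
  linkage_reduction_general D u c S f hf q qx qt hqx hqt m hm mx mt hmx hmt h1 h2
end

section
/- Let I, J ⊆ ℝ be open intervals, u, c, S : ℝ × ℝ → ℝ continuous functions, f : ℝ → ℝ twice continuously differentiable, and q : ℝ × ℝ → ℝ a continuously differentiable function of (x, t) on I × J; set m(x,t) = f(q(x,t)). Assume that for all (x,t) ∈ I × J: (i) ∂_t q + ∂_x m = 0; (ii) ∂_t m + 2u(q,m)·∂_x m + (c(q,m)² − u(q,m)²)·∂_x q = S(q,m); and (iii) S(q(x,t), m(x,t)) ≠ 0. Then there exist real constants A and B such that for all (x,t) ∈ I × J: m(x,t) = A·q(x,t) − B, ∂_t q + A·∂_x q = 0, and ∂_t m + A·∂_x m = 0. In particular, the solution of the nonlinear non-homogeneous system is also a non-constant solution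 of a linear homogeneous transport system with constant speed A. -/
/-!
Substituting `m = f(q)` into the system gives `q_t = -f'(q) q_x` and
`(c² - (u - f')²)(q) · q_x = S(q, f(q))`, so `q_x = 1 / R(q)` with `R` continuous wherever the
source does not vanish. If `X` is an antiderivative of `R` on the interval `q(I × J)`, then
`X(q(x, t))` has `x`-derivative `1` and `t`-derivative `-f'(q)`. The first makes `X(q) - x` a
function of `t` alone, so the second makes `f'(q(x, t))` independent of `x`; as `q_x ≠ 0`, this
forces `f'' = 0` on `q(I × J)`. Hence `f` is affine there and the speed `f'(q)` is a constant `A`.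
-/

open Set Filter Topology

theorem Convex.eq_of_forall_hasDerivAt_zero {s : Set ℝ} (hs : Convex ℝ s) {g : ℝ → ℝ}
    (hg : ∀ y ∈ s, HasDerivAt g 0 y) {y z : ℝ} (hy : y ∈ s) (hz : z ∈ s) : g y = g z := by
  have h := hs.norm_image_sub_le_of_norm_hasDerivWithin_le (f' := fun _ => 0) (C := 0)
    (fun w hw => (hg w hw).hasDerivWithinAt) (fun _ _ => norm_zero.le) hz hy
  rw [zero_mul, norm_le_zero_iff, sub_eq_zero] at h
  exact h

theorem Set.OrdConnected.exists_hasDerivAt_of_continuousOn {s V : Set ℝ} (hs : s.OrdConnected)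
    (hV : IsOpen V) (hsV : s ⊆ V) {R : ℝ → ℝ} (hR : ContinuousOn R V) :
    ∃ X : ℝ → ℝ, ∀ y ∈ s, HasDerivAt X (R y) y := by
  rcases s.eq_empty_or_nonempty with rfl | ⟨y₀, hy₀⟩
  · exact ⟨0, by simp⟩
  refine ⟨fun y => ∫ z in y₀..y, R z, fun y hy => ?_⟩
  exact intervalIntegral.integral_hasDerivAt_right
    ((hR.mono ((hs.uIcc_subset hy₀ hy).trans hsV)).intervalIntegrable)
    (hR.stronglyMeasurableAtFilter hV y (hsV hy)) (hR.continuousAt (hV.mem_nhds (hsV hy)))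

theorem deriv_eq_zero_of_eventually_comp_eq {F g : ℝ → ℝ} {g' x : ℝ}
    (hF : DifferentiableAt ℝ F (g x)) (hg : HasDerivAt g g' x) (hg' : g' ≠ 0)
    (hconst : ∀ᶠ y in 𝓝 x, F (g y) = F (g x)) : deriv F (g x) = 0 := by
  have h := (hF.hasDerivAt.comp x hg).unique
    ((hasDerivAt_const x (F (g x))).congr_of_eventuallyEq hconst)
  exact (mul_eq_zero.1 h).resolve_right hg'

namespace DifferentiableAt

variable {q : ℝ × ℝ → ℝ} {p : ℝ × ℝ}

theorem hasDerivAt_fst_slice (hq : DifferentiableAt ℝ q p) :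
    HasDerivAt (fun x => q (x, p.2)) (fderiv ℝ q p (1, 0)) p.1 :=
  hq.hasFDerivAt.comp_hasDerivAt_of_eq p.1
    ((hasDerivAt_id p.1).prodMk (hasDerivAt_const p.1 p.2)) rfl

theorem hasDerivAt_snd_slice (hq : DifferentiableAt ℝ q p) :
    HasDerivAt (fun t => q (p.1, t)) (fderiv ℝ q p (0, 1)) p.2 :=
  hq.hasFDerivAt.comp_hasDerivAt_of_eq p.2
    ((hasDerivAt_const p.2 p.1).prodMk (hasDerivAt_id p.2)) rfl

theorem fderiv_comp_apply (hq : DifferentiableAt ℝ q p) {f : ℝ → ℝ}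
    (hf : DifferentiableAt ℝ f (q p)) (v : ℝ × ℝ) :
    fderiv ℝ (fun p => f (q p)) p v = deriv f (q p) * fderiv ℝ q p v := by
  have h : HasFDerivAt (fun p => f (q p)) (deriv f (q p) • fderiv ℝ q p) p :=
    hf.hasDerivAt.comp_hasFDerivAt p hq.hasFDerivAt
  rw [h.fderiv]
  rfl

end DifferentiableAt

theorem hasDerivAt_snd_slice_indep_fst {I J : Set ℝ} (hI : Convex ℝ I) (hJ : IsOpen J)
    {g h : ℝ × ℝ → ℝ} (hgx : ∀ p ∈ I ×ˢ J, HasDerivAt (fun x => g (x, p.2)) 0 p.1)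
    (hgt : ∀ p ∈ I ×ˢ J, HasDerivAt (fun t => g (p.1, t)) (h p) p.2)
    {x x' t : ℝ} (hx : x ∈ I) (hx' : x' ∈ I) (ht : t ∈ J) : h (x, t) = h (x', t) := by
  have hslice : ∀ τ ∈ J, g (x, τ) = g (x', τ) := fun τ hτ =>
    hI.eq_of_forall_hasDerivAt_zero (g := fun z => g (z, τ))
      (fun z hz => hgx (z, τ) ⟨hz, hτ⟩) hx hx'
  exact (hgt (x, t) ⟨hx, ht⟩).unique
    ((hgt (x', t) ⟨hx', ht⟩).congr_of_eventuallyEq (eventually_of_mem (hJ.mem_nhds ht) hslice))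

section Transport

variable {I J : Set ℝ} {q : ℝ × ℝ → ℝ} {F R : ℝ → ℝ}

theorem transport_speed_indep_fst (hI : Convex ℝ I) (hJ : IsOpen J)
    (hq : ∀ p ∈ I ×ˢ J, DifferentiableAt ℝ q p) {X : ℝ → ℝ}
    (hX : ∀ p ∈ I ×ˢ J, HasDerivAt X (R (q p)) (q p))
    (hRq : ∀ p ∈ I ×ˢ J, R (q p) * fderiv ℝ q p (1, 0) = 1)
    (htr : ∀ p ∈ I ×ˢ J, fderiv ℝ q p (0, 1) + F (q p) * fderiv ℝ q p (1, 0) = 0)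
    {x x' t : ℝ} (hx : x ∈ I) (hx' : x' ∈ I) (ht : t ∈ J) : F (q (x, t)) = F (q (x', t)) := by
  refine neg_injective (hasDerivAt_snd_slice_indep_fst hI hJ (g := fun p => X (q p) - p.1)
    (h := fun p => -F (q p)) (fun p hp => ?_) (fun p hp => ?_) hx hx' ht)
  · have h := ((hX p hp).comp p.1 (hq p hp).hasDerivAt_fst_slice).sub (hasDerivAt_id p.1)
    rwa [hRq p hp, sub_self] at h
  · have h := (hX p hp).comp p.2 (hq p hp).hasDerivAt_snd_slice
    rw [show R (q p) * fderiv ℝ q p (0, 1) = -F (q p) by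
      linear_combination R (q p) * htr p hp - F (q p) * hRq p hp] at h
    exact h.sub_const p.1

theorem exists_affine_of_transport (hIo : IsOpen I) (hI : Convex ℝ I) (hJo : IsOpen J)
    (hJ : Convex ℝ J) (hq : DifferentiableOn ℝ q (I ×ˢ J)) {f : ℝ → ℝ}
    (hf : Differentiable ℝ f) (hf' : Differentiable ℝ (deriv f)) {V : Set ℝ} (hV : IsOpen V)
    (hqV : MapsTo q (I ×ˢ J) V) (hR : ContinuousOn R V)
    (hRq : ∀ p ∈ I ×ˢ J, R (q p) * fderiv ℝ q p (1, 0) = 1)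
    (htr : ∀ p ∈ I ×ˢ J, fderiv ℝ q p (0, 1) + deriv f (q p) * fderiv ℝ q p (1, 0) = 0) :
    ∃ A B : ℝ, ∀ p ∈ I ×ˢ J, deriv f (q p) = A ∧ f (q p) = A * q p - B := by
  have hqd : ∀ p ∈ I ×ˢ J, DifferentiableAt ℝ q p := fun p hp =>
    hq.differentiableAt ((hIo.prod hJo).mem_nhds hp)
  have hK : (q '' (I ×ˢ J)).OrdConnected :=
    ((hI.prod hJ).isPreconnected.image q hq.continuousOn).ordConnected
  obtain ⟨X, hX⟩ := hK.exists_hasDerivAt_of_continuousOn hV hqV.image_subset hR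
  have hf'' : ∀ y ∈ q '' (I ×ˢ J), HasDerivAt (deriv f) 0 y := by
    rintro _ ⟨⟨x, t⟩, hp, rfl⟩
    have hconst : ∀ᶠ x' in 𝓝 x, deriv f (q (x', t)) = deriv f (q (x, t)) :=
      eventually_of_mem (hIo.mem_nhds hp.1) fun x' hx' =>
        transport_speed_indep_fst hI hJo hqd (fun p hp => hX _ ⟨p, hp, rfl⟩) hRq htr hx' hp.1 hp.2
    rw [← deriv_eq_zero_of_eventually_comp_eq (g := fun x' => q (x', t)) (hf' _)
      (hqd _ hp).hasDerivAt_fst_slice (right_ne_zero_of_mul_eq_one (hRq _ hp)) hconst]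
    exact (hf' _).hasDerivAt
  rcases (I ×ˢ J).eq_empty_or_nonempty with hΩ | ⟨p₀, hp₀⟩
  · exact ⟨0, 0, by simp [hΩ]⟩
  have hy₀ : q p₀ ∈ q '' (I ×ˢ J) := ⟨p₀, hp₀, rfl⟩
  set A := deriv f (q p₀)
  have hA : ∀ p ∈ I ×ˢ J, deriv f (q p) = A := fun p hp =>
    hK.convex.eq_of_forall_hasDerivAt_zero hf'' ⟨p, hp, rfl⟩ hy₀
  have hlin : ∀ y ∈ q '' (I ×ˢ J), HasDerivAt (fun y => f y - A * y) 0 y := by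
    rintro _ ⟨p, hp, rfl⟩
    have h := (hf _).hasDerivAt.sub ((hasDerivAt_id (q p)).const_mul A)
    rwa [hA p hp, mul_one, sub_self] at h
  refine ⟨A, A * q p₀ - f (q p₀), fun p hp => ⟨hA p hp, ?_⟩⟩
  linarith [hK.convex.eq_of_forall_hasDerivAt_zero hlin ⟨p, hp, rfl⟩ hy₀]

end Transport

/-- Source wave linearity: a solution with linkage `m = f(q)` of the nonlinear
non-homogeneous 2×2 system `q_t + m_x = 0`,
`m_t + 2u m_x + (c² − u²) q_x = S(q, m)` with nowhere-vanishing source is also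
a solution of the linear homogeneous transport system `q_t + A q_x = 0`,
`m_t + A m_x = 0` for a real constant `A`, with affine linkage `m = A q − B`.
Variables are ordered `(x, t)`. -/
theorem source_wave_linearity (a b a' b' : ℝ) (I J : Set ℝ)
    (hI : I = Set.Ioo a b) (hJ : J = Set.Ioo a' b')
    (u c S : ℝ × ℝ → ℝ)
    (hu : Continuous u) (hc : Continuous c) (hS : Continuous S)
    (f : ℝ → ℝ) (hf : ContDiff ℝ 2 f)
    (q : ℝ × ℝ → ℝ) (hq : ContDiffOn ℝ 1 q (I ×ˢ J))
    (m : ℝ × ℝ → ℝ) (hm : m = fun p => f (q p))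
    (h1 : ∀ p ∈ I ×ˢ J, fderiv ℝ q p (0, 1) + fderiv ℝ m p (1, 0) = 0)
    (h2 : ∀ p ∈ I ×ˢ J,
      fderiv ℝ m p (0, 1) + 2 * u (q p, m p) * fderiv ℝ m p (1, 0)
        + (c (q p, m p) ^ 2 - u (q p, m p) ^ 2) * fderiv ℝ q p (1, 0)
        = S (q p, m p))
    (h3 : ∀ p ∈ I ×ˢ J, S (q p, m p) ≠ 0) :
    ∃ A B : ℝ, ∀ p ∈ I ×ˢ J,
      m p = A * q p - B ∧
      fderiv ℝ q p (0, 1) + A * fderiv ℝ q p (1, 0) = 0 ∧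
      fderiv ℝ m p (0, 1) + A * fderiv ℝ m p (1, 0) = 0 := by
  subst hm hI hJ
  have hf1 : Differentiable ℝ f := hf.differentiable two_ne_zero
  have hf2 : ContDiff ℝ 1 (deriv f) := hf.deriv' (n := 1)
  have hqd : DifferentiableOn ℝ q (Ioo a b ×ˢ Ioo a' b') := hq.differentiableOn one_ne_zero
  have hm' : ∀ p ∈ Ioo a b ×ˢ Ioo a' b', ∀ v, fderiv ℝ (fun p => f (q p)) p v =
      deriv f (q p) * fderiv ℝ q p v := fun p hp =>
    ((hqd p hp).differentiableAt ((isOpen_Ioo.prod isOpen_Ioo).mem_nhds hp)).fderiv_comp_apply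
      (hf1 _)
  have htr : ∀ p ∈ Ioo a b ×ˢ Ioo a' b',
      fderiv ℝ q p (0, 1) + deriv f (q p) * fderiv ℝ q p (1, 0) = 0 := fun p hp => by
    simpa only [hm' p hp] using h1 p hp
  set R : ℝ → ℝ := fun y => (c (y, f y) ^ 2 - (u (y, f y) - deriv f y) ^ 2) / S (y, f y)
  have hRq : ∀ p ∈ Ioo a b ×ˢ Ioo a' b', R (q p) * fderiv ℝ q p (1, 0) = 1 := fun p hp => by
    have h2p := h2 p hp
    rw [hm' p hp, hm' p hp, eq_neg_of_add_eq_zero_left (htr p hp)] at h2p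
    rw [div_mul_eq_mul_div, div_eq_one_iff_eq (h3 p hp)]
    linear_combination h2p
  have hV : IsOpen {y | S (y, f y) ≠ 0} := isOpen_ne_fun (by fun_prop) continuous_const
  have hR : ContinuousOn R {y | S (y, f y) ≠ 0} := by
    have hfc := hf1.continuous
    have hf'c := hf2.continuous
    exact ContinuousOn.div (by fun_prop) (by fun_prop) fun _ hy => hy
  obtain ⟨A, B, hAB⟩ := exists_affine_of_transport isOpen_Ioo (convex_Ioo a b) isOpen_Ioo
    (convex_Ioo a' b') hqd hf1 (hf2.differentiable one_ne_zero) hV h3 hR hRq htr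
  refine ⟨A, B, fun p hp => ⟨(hAB p hp).2, ?_, ?_⟩⟩
  · rw [← (hAB p hp).1]; exact htr p hp
  · rw [hm' p hp, hm' p hp, ← (hAB p hp).1]; linear_combination deriv f (q p) * htr p hp
end
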